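/- Let V be a finite type and let P be a superset-closed predicate on finite subsets of V such that the full vertex set V is a P-set. For R ⊆ V, the map ν_R sending S to the symmetric difference S ⊖ R is a well-defined graph automorphism of the P-TAR graph (in particular S ⊖ R is a P-set for every P-set S) if and only if R is P-irrelevant. -/

import Mathlib

/-- The TAR (token addition/removal) graph of a predicate `P` on finite subsets of `V`:
vertices are the `P`-sets, two `P`-sets being adjacent iff their symmetric difference
has exactly one element. -/
def tarGraph {V : Type*} [DecidableEq V] (P : Finset V → Prop) :
    SimpleGraph {S : Finset V // P S} where
  Adj S T := (symmDiff S.1 T.1).card = 1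
  symm := ⟨by intro S T h; show (symmDiff T.1 S.1).card = 1; rw [symmDiff_comm]; exact h⟩
  loopless := ⟨by intro S h; simp [symmDiff_self] at h⟩

/-- `S` is a minimal `P`-set: `S` is a `P`-set and no proper subset of `S` is a `P`-set. -/
def IsMinimalPSet {V : Type*} (P : Finset V → Prop) (S : Finset V) : Prop :=
  P S ∧ ∀ T : Finset V, T ⊂ S → ¬ P T

/-- `R` is `P`-irrelevant: no minimal `P`-set contains any vertex of `R`. -/
def IsIrrelevant {V : Type*} (P : Finset V → Prop) (R : Finset V) : Prop :=
  ∀ S : Finset V, IsMinimalPSet P S → ∀ v ∈ R, v ∉ S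

/-!
Every `P`-set contains a minimal one, so for superset-closed `P` a set is a `P`-set iff it
contains a minimal `P`-set. If `R` meets no minimal `P`-set, a minimal `P`-set `M ⊆ S` survives
in `S \ R ⊆ S ∆ R`, so `ν_R` maps `P`-sets to `P`-sets; being an involution that preserves
symmetric differences, it is then a TAR-graph automorphism. Conversely, if `ν_R` preserves
`P`-sets and `M` is minimal, then `(M ∪ R) ∆ R = M \ R` is a `P`-set inside `M`, so `M` misses `R`.
-/

section

variable {V : Type*} {P : Finset V → Prop}

theorem exists_isMinimalPSet_subset {S : Finset V} (hS : P S) :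
    ∃ M ⊆ S, IsMinimalPSet P M := by
  obtain ⟨M, hMS, hM⟩ := exists_minimal_le_of_wellFoundedLT P S hS
  exact ⟨M, hMS, minimal_iff_forall_lt.1 hM⟩

variable [DecidableEq V] {R : Finset V}

theorem IsMinimalPSet.disjoint_of_sdiff {M : Finset V} (hM : IsMinimalPSet P M)
    (hMR : P (M \ R)) : Disjoint M R := by
  refine Finset.disjoint_left.2 fun v hvM hvR => hM.2 (M \ R) ?_ hMR
  exact Finset.ssubset_iff_of_subset Finset.sdiff_subset |>.2 ⟨v, hvM, by simp [hvR]⟩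

theorem isIrrelevant_iff_forall_symmDiff (hP : ∀ S T : Finset V, P S → S ⊆ T → P T) :
    IsIrrelevant P R ↔ ∀ S, P S → P (symmDiff S R) := by
  constructor
  · intro hR S hS
    obtain ⟨M, hMS, hM⟩ := exists_isMinimalPSet_subset hS
    have hMR : Disjoint M R := Finset.disjoint_left.2 fun v hvM hvR => hR M hM v hvR hvM
    have hMS' : M ⊆ S \ R := Finset.subset_sdiff.2 ⟨hMS, hMR⟩
    exact hP M _ hM.1 <| hMS'.trans <| le_sup_left.trans_eq (symmDiff_def S R).symm
  · intro hR M hM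
    have hMR : P (M \ R) := by
      have hPR := hR (M ∪ R) (hP M _ hM.1 Finset.subset_union_left)
      rwa [symmDiff_of_ge (Finset.subset_union_right : R ⊆ M ∪ R),
        Finset.union_sdiff_right] at hPR
    exact fun v hvR hvM => Finset.disjoint_left.1 (hM.disjoint_of_sdiff hMR) hvM hvR

def tarGraph.symmDiffIso (hR : ∀ S, P S → P (symmDiff S R)) : tarGraph P ≃g tarGraph P where
  toFun S := ⟨symmDiff S.1 R, hR _ S.2⟩
  invFun S := ⟨symmDiff S.1 R, hR _ S.2⟩
  left_inv S := Subtype.ext (symmDiff_symmDiff_cancel_right R S.1)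
  right_inv S := Subtype.ext (symmDiff_symmDiff_cancel_right R S.1)
  map_rel_iff' {S T} := by
    change (symmDiff (symmDiff S.1 R) (symmDiff T.1 R)).card = 1 ↔ (symmDiff S.1 T.1).card = 1
    rw [symmDiff_symmDiff_symmDiff_comm, symmDiff_self, symmDiff_bot]

end

theorem nuR_automorphism_iff_irrelevant_general {V : Type*} [DecidableEq V]
    (P : Finset V → Prop)
    (hP : ∀ S T : Finset V, P S → S ⊆ T → P T)
    (R : Finset V) :
    (∃ φ : tarGraph P ≃g tarGraph P,
        ∀ S : {S : Finset V // P S}, (φ S).1 = symmDiff S.1 R)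
      ↔ IsIrrelevant P R := by
  rw [isIrrelevant_iff_forall_symmDiff hP]
  constructor
  · rintro ⟨φ, hφ⟩ S hS
    simpa [hφ] using (φ ⟨S, hS⟩).2
  · intro hR
    exact ⟨tarGraph.symmDiffIso hR, fun _ => rfl⟩

/-- For a superset-closed predicate `P` with the full vertex set a `P`-set,
the map `ν_R : S ↦ S ⊖ R` is a well-defined graph automorphism of the `P`-TAR
graph if and only if `R` is `P`-irrelevant. -/
theorem nuR_automorphism_iff_irrelevant {V : Type*} [Fintype V] [DecidableEq V]
    (P : Finset V → Prop)
    (hP : ∀ S T : Finset V, P S → S ⊆ T → P T)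
    (huniv : P Finset.univ)
    (R : Finset V) :
    (∃ φ : tarGraph P ≃g tarGraph P,
        ∀ S : {S : Finset V // P S}, (φ S).1 = symmDiff S.1 R)
      ↔ IsIrrelevant P R :=
  nuR_automorphism_iff_irrelevant_general P hP R
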